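/- Let $R(x,y) = (R_1(x,y),\ldots,R_r(x,y))$ be an $r$-tuple of formal power series in $(x,y) \in \mathbb{C}^q \times \mathbb{C}^r$, and let $h^0 : (\mathbb{C}^q,0) \to (\mathbb{C}^r,0)$ be a formal map such that $R(x,h^0(x)) = 0$ and $\det\left(\frac{\partial R_i}{\partial y_j}(x,h^0(x))\right)_{1 \le i,j \le r} \neq 0$ as a formal power series in $x$. Then there exists a positive integer $k$ (depending on $h^0$) such that any formal map $h : (\mathbb{C}^q,0) \to (\mathbb{C}^r,0)$ satisfying $R(x,h(x)) = 0$ and agreeing with $h^0$ up to order $k$ (i.e., $j^k_0 h = j^k_0 h^0$) must equal $h^0$. -/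

import Mathlib

open MvPowerSeries

/-- Formal composition (substitution) of power series: `f` evaluated on the family `a`.
This is the standard substitution, meaningful when each `a s` has zero constant
coefficient (so that each coefficient of the result is a finite sum). -/
noncomputable def fsubst {σ τ : Type*} [Fintype σ] [DecidableEq σ]
    (a : σ → MvPowerSeries τ ℂ) (f : MvPowerSeries σ ℂ) : MvPowerSeries τ ℂ :=
  fun e => MvPowerSeries.coeff e
    (∑ m ∈ Finset.Iic (Finsupp.equivFunOnFinite.symm fun _ => (e.sum fun _ x => x)),
      MvPowerSeries.coeff m f • ∏ s : σ, (a s) ^ m s)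

/-- The formal partial derivative `∂f/∂x_s` of a formal power series. -/
noncomputable def pd {σ : Type*} (s : σ) (f : MvPowerSeries σ ℂ) : MvPowerSeries σ ℂ :=
  fun m => ((m s : ℂ) + 1) * MvPowerSeries.coeff (m + Finsupp.single s 1) f

/-- The iterated formal partial derivative `∂^ν f`. -/
noncomputable def iterD {σ : Type*} (ν : σ →₀ ℕ) (f : MvPowerSeries σ ℂ) :
    MvPowerSeries σ ℂ :=
  fun m => ((ν.prod fun s e => Nat.descFactorial (m s + e) e : ℕ) : ℂ) *
    MvPowerSeries.coeff (m + ν) f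

/-- A formal power series is convergent if its coefficients grow at most
geometrically. -/
def Convergent {σ : Type*} (f : MvPowerSeries σ ℂ) : Prop :=
  ∃ C r : ℝ, 0 < r ∧ ∀ m : σ →₀ ℕ,
    ‖MvPowerSeries.coeff m f‖ ≤ C * r ^ (m.sum fun _ e => e)

/-!
Write `δ = h - h⁰` and let `n` be the least order of its components. Taylor expansion of
`R(x, ·)` at `h⁰` gives `0 = R(x, h) - R(x, h⁰) ≡ J δ` modulo series of order `≥ 2n`, where
`J = (∂R/∂y)(x, h⁰)`. Multiplying by the adjugate of `J`, the series `det J · δⱼ` have order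
`≥ 2n`; but `det J · δⱼ` has order `ord (det J) + n` for a component of order `n`, so
`n ≤ ord (det J)`. Hence agreement up to order `ord (det J) + 1` forces `δ = 0`.
-/

namespace MvPowerSeries

variable {σ R : Type*} [CommRing R]

variable (σ R) in
def orderIdeal (n : ℕ) : Ideal (MvPowerSeries σ R) where
  carrier := {f | n ≤ f.order}
  add_mem' ha hb := (le_min ha hb).trans min_order_le_add
  zero_mem' := by simp
  smul_mem' c _ hf := (le_add_left hf).trans le_order_mul

theorem mem_orderIdeal {n : ℕ} {f : MvPowerSeries σ R} : f ∈ orderIdeal σ R n ↔ n ≤ f.order :=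
  Iff.rfl

theorem orderIdeal_anti {m n : ℕ} (h : m ≤ n) : orderIdeal σ R n ≤ orderIdeal σ R m :=
  fun _ hf => (Nat.cast_le.mpr h).trans (mem_orderIdeal.mp hf)

theorem mul_mem_orderIdeal {m n : ℕ} {f g : MvPowerSeries σ R} (hf : f ∈ orderIdeal σ R m)
    (hg : g ∈ orderIdeal σ R n) : f * g ∈ orderIdeal σ R (m + n) := by
  rw [mem_orderIdeal, Nat.cast_add]
  exact (add_le_add hf hg).trans le_order_mul

theorem sub_truncTotal_mem_orderIdeal [Finite σ] (n : ℕ) (f : MvPowerSeries σ R) :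
    f - truncTotal n f ∈ orderIdeal σ R n :=
  nat_le_order fun d hd => by
    rw [map_sub, MvPolynomial.coeff_coe, coeff_truncTotal _ (by exact_mod_cast hd), sub_self]

theorem pderiv_mem_orderIdeal {n : ℕ} {f : MvPowerSeries σ R} (i : σ)
    (hf : f ∈ orderIdeal σ R (n + 1)) : pderiv R i f ∈ orderIdeal σ R n :=
  nat_le_order fun d hd => by
    have hdeg : ((d + Finsupp.single i 1).degree : ℕ∞) < ↑(n + 1) := by
      rw [map_add, Finsupp.degree_single]
      exact_mod_cast Nat.add_lt_add_right hd 1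
    rw [coeff_pderiv, coeff_of_lt_order (hdeg.trans_le hf), zero_mul]

theorem subst_mem_orderIdeal {τ : Type*} [Finite σ] {a : σ → MvPowerSeries τ R}
    (ha : ∀ s, constantCoeff (a s) = 0) {n : ℕ} {f : MvPowerSeries σ R}
    (hf : f ∈ orderIdeal σ R n) : subst a f ∈ orderIdeal τ R n := by
  have h1 : 1 ≤ ⨅ s, (a s).order :=
    le_iInf fun s => one_le_order_iff_constCoeff_eq_zero.mpr (ha s)
  calc (n : ℕ∞) ≤ 1 * f.order := by rwa [one_mul]
    _ ≤ (⨅ s, (a s).order) * f.order := mul_le_mul_left h1 _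
    _ ≤ (subst a f).order := le_order_subst (hasSubst_of_constantCoeff_zero ha) f

theorem degree_le_order_prod_pow {τ : Type*}
    {a : σ → MvPowerSeries τ R} (ha : ∀ s, constantCoeff (a s) = 0) (d : σ →₀ ℕ) :
    (d.degree : ℕ∞) ≤ (d.prod fun s k => a s ^ k).order := by
  rw [Finsupp.degree_apply, Nat.cast_sum]
  exact (Finset.sum_le_sum fun s _ => le_order_pow_of_constantCoeff_eq_zero _ (ha s)).trans
    (le_order_prod _ _)

theorem constantCoeff_sumElim_X {ι : Type*}
    {h : ι → MvPowerSeries σ R} (hh : ∀ i, constantCoeff (h i) = 0) :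
    ∀ s, constantCoeff (Sum.elim X h s) = 0
  | .inl _ => constantCoeff_X _
  | .inr i => hh i

end MvPowerSeries

namespace MvPolynomial

theorem aeval_add_sub_aeval_sub_sum_pderiv_mem {σ R S : Type*} [Fintype σ] [CommRing R]
    [CommRing S] [Algebra R S] {I : Ideal S} {x y : σ → S} (hy : ∀ i j, y i * y j ∈ I)
    (p : MvPolynomial σ R) :
    aeval (x + y) p - aeval x p - ∑ i, aeval x (pderiv i p) * y i ∈ I := by
  induction p using MvPolynomial.induction_on with
  | C c => simp
  | add p q hp hq =>
    simpa only [map_add, add_mul, Finset.sum_add_distrib, add_sub_add_comm] using add_mem hp hq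
  | mul_X p j hp =>
    classical
    have hs : ∑ i, aeval x (pderiv i (p * X j)) * y i
        = (∑ i, aeval x (pderiv i p) * y i) * x j + aeval x p * y j := by
      simp only [Derivation.leibniz, pderiv_X, Pi.single_apply, smul_eq_mul, mul_ite, mul_one,
        mul_zero, map_add, map_mul, aeval_X, add_mul, Finset.sum_add_distrib, Finset.sum_mul]
      rw [add_comm]
      simp [apply_ite, mul_comm, mul_left_comm]
    have key : aeval (x + y) (p * X j) - aeval x (p * X j)
          - ∑ i, aeval x (pderiv i (p * X j)) * y i
        = (aeval (x + y) p - aeval x p - ∑ i, aeval x (pderiv i p) * y i) * (x j + y j)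
          + ∑ i, aeval x (pderiv i p) * (y i * y j) := by
      simp only [hs, ← mul_assoc, ← Finset.sum_mul, map_mul, aeval_X, Pi.add_apply]
      ring
    rw [key]
    exact add_mem (Ideal.mul_mem_right _ _ hp)
      (Ideal.sum_mem _ fun i _ => Ideal.mul_mem_left _ _ (hy i j))

end MvPolynomial

namespace MvPowerSeries

variable {σ τ R : Type*} [Fintype σ] [CommRing R]

theorem subst_sub_subst_sub_sum_pderiv_mem_orderIdeal {a b : σ → MvPowerSeries τ R}
    (ha : ∀ s, constantCoeff (a s) = 0) (hb : ∀ s, constantCoeff (b s) = 0) {n : ℕ}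
    (hab : ∀ s, a s - b s ∈ orderIdeal τ R n) (f : MvPowerSeries σ R) :
    subst a f - subst b f - ∑ s, subst b (pderiv R s f) * (a s - b s)
      ∈ orderIdeal τ R (n + n) := by
  set p := truncTotal (n + n + 1) f
  set g := f - p
  have hg : g ∈ orderIdeal σ R (n + n + 1) := sub_truncTotal_mem_orderIdeal _ f
  have hf : f = p + g := (add_sub_cancel _ _).symm
  have hpoly := MvPolynomial.aeval_add_sub_aeval_sub_sum_pderiv_mem (R := R) (x := b)
    (y := a - b) (fun i j => mul_mem_orderIdeal (hab i) (hab j)) p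
  rw [add_sub_cancel] at hpoly
  simp only [Pi.sub_apply] at hpoly
  have key : subst a f - subst b f - ∑ s, subst b (pderiv R s f) * (a s - b s)
      = (MvPolynomial.aeval a p - MvPolynomial.aeval b p
          - ∑ s, MvPolynomial.aeval b (MvPolynomial.pderiv s p) * (a s - b s))
        + (subst a g - subst b g - ∑ s, subst b (pderiv R s g) * (a s - b s)) := by
    rw [hf]
    simp only [subst_add (hasSubst_of_constantCoeff_zero ha),
      subst_add (hasSubst_of_constantCoeff_zero hb), map_add, pderiv_coe, subst_coe, add_mul,
      Finset.sum_add_distrib]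
    ring
  rw [key]
  refine add_mem hpoly (sub_mem (sub_mem ?_ ?_) (Ideal.sum_mem _ fun s _ => ?_))
  · exact orderIdeal_anti (by omega) (subst_mem_orderIdeal ha hg)
  · exact orderIdeal_anti (by omega) (subst_mem_orderIdeal hb hg)
  · have hg' := subst_mem_orderIdeal hb (pderiv_mem_orderIdeal s hg)
    exact mul_mem_orderIdeal (orderIdeal_anti (by omega) hg') (hab s)

end MvPowerSeries

open Matrix in
theorem Matrix.det_mul_mem_of_mulVec_mem {ι R : Type*} [Fintype ι] [DecidableEq ι] [CommRing R]
    {I : Ideal R} {A : Matrix ι ι R} {v : ι → R} (h : ∀ i, (A *ᵥ v) i ∈ I) (i : ι) :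
    A.det * v i ∈ I := by
  have hv : A.det • v = A.adjugate *ᵥ (A *ᵥ v) := by
    rw [mulVec_mulVec, adjugate_mul, smul_mulVec, one_mulVec]
  rw [← smul_eq_mul, ← Pi.smul_apply, hv]
  exact Ideal.sum_mem _ fun j _ => Ideal.mul_mem_left _ _ (h j)

theorem fsubst_eq_subst {σ τ : Type*} [Fintype σ] [DecidableEq σ] {a : σ → MvPowerSeries τ ℂ}
    (ha : ∀ s, constantCoeff (a s) = 0) (f : MvPowerSeries σ ℂ) : fsubst a f = subst a f := by
  ext e
  rw [coeff_subst (hasSubst_of_constantCoeff_zero ha), finsum_eq_sum_of_support_subset _ ?_]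
  · show coeff e (∑ m ∈ _, _) = _
    simp only [map_sum, LinearMap.map_smul_of_tower, Finsupp.prod_fintype _ _ (fun _ => pow_zero _)]
    rfl
  · intro m hm
    rw [Finset.mem_coe, Finset.mem_Iic, Finsupp.le_def]
    intro s
    by_contra hlt
    have hdeg : e.degree < m.degree :=
      (not_le.mp hlt).trans_le (Finsupp.le_degree s m)
    apply hm
    beta_reduce
    rw [coeff_of_lt_order ((Nat.cast_lt.mpr hdeg).trans_le (degree_le_order_prod_pow ha m)),
      smul_zero]

theorem pd_eq_pderiv {σ : Type*} (s : σ) (f : MvPowerSeries σ ℂ) : pd s f = pderiv ℂ s f := by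
  ext m
  rw [coeff_pderiv, mul_comm]
  rfl

section FormalSolutions

open Matrix

variable {σ ι K : Type*} [Fintype σ] [Fintype ι] [CommRing K]

noncomputable def jacobianAlong (R : ι → MvPowerSeries (σ ⊕ ι) K) (h : ι → MvPowerSeries σ K) :
    Matrix ι ι (MvPowerSeries σ K) :=
  Matrix.of fun i j => subst (Sum.elim X h) (pderiv K (Sum.inr j) (R i))

theorem jacobianAlong_mulVec_sub_mem_orderIdeal (R : ι → MvPowerSeries (σ ⊕ ι) K)
    {h h0 : ι → MvPowerSeries σ K} (hh : ∀ i, constantCoeff (h i) = 0)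
    (hh0 : ∀ i, constantCoeff (h0 i) = 0) (hsol : ∀ i, subst (Sum.elim X h) (R i) = 0)
    (hsol0 : ∀ i, subst (Sum.elim X h0) (R i) = 0) {n : ℕ}
    (hn : ∀ j, h j - h0 j ∈ orderIdeal σ K n) (i : ι) :
    (jacobianAlong R h0 *ᵥ (h - h0)) i ∈ orderIdeal σ K (n + n) := by
  have hab : ∀ s, Sum.elim X h s - Sum.elim X h0 s ∈ orderIdeal σ K n
    | .inl _ => by simp only [Sum.elim_inl, sub_self, zero_mem]
    | .inr j => hn j
  have htaylor := subst_sub_subst_sub_sum_pderiv_mem_orderIdeal (constantCoeff_sumElim_X hh)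
    (constantCoeff_sumElim_X hh0) hab (R i)
  simp only [hsol, hsol0, Fintype.sum_sum_type, Sum.elim_inl, Sum.elim_inr, sub_self, mul_zero,
    Finset.sum_const_zero, zero_add, zero_sub, neg_mem_iff] at htaylor
  exact htaylor

theorem eq_of_order_det_jacobianAlong_lt [DecidableEq ι] [IsDomain K]
    (R : ι → MvPowerSeries (σ ⊕ ι) K) {h h0 : ι → MvPowerSeries σ K}
    (hh : ∀ i, constantCoeff (h i) = 0) (hh0 : ∀ i, constantCoeff (h0 i) = 0)
    (hsol : ∀ i, subst (Sum.elim X h) (R i) = 0) (hsol0 : ∀ i, subst (Sum.elim X h0) (R i) = 0)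
    (hord : ∀ j, (jacobianAlong R h0).det.order < (h j - h0 j).order) : h = h0 := by
  by_contra hne
  obtain ⟨j1, hj1⟩ : ∃ j, h j - h0 j ≠ 0 := by
    by_contra! hc
    exact hne (funext fun j => sub_eq_zero.mp (hc j))
  have : Nonempty ι := ⟨j1⟩
  obtain ⟨j0, hj0⟩ := Finite.exists_min fun j => (h j - h0 j).order
  set n := (h j0 - h0 j0).order.toNat
  have hn : (n : ℕ∞) = (h j0 - h0 j0).order :=
    ENat.natCast_toNat ((hj0 j1).trans_lt (Ne.lt_top (order_eq_top_iff.not.mpr hj1))).ne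
  have hdet := det_mul_mem_of_mulVec_mem
    (jacobianAlong_mulVec_sub_mem_orderIdeal R hh hh0 hsol hsol0 fun j => hn ▸ hj0 j) j0
  rw [mem_orderIdeal, Pi.sub_apply, order_mul, ← hn, Nat.cast_add] at hdet
  have := hord j0
  rw [← hn] at this
  exact absurd hdet (not_le.mpr ((ENat.add_lt_add_iff_right (ENat.natCast_ne_top n)).mpr this))

end FormalSolutions

/-- Finite determination of formal solutions of a formal system with generically
nondegenerate Jacobian along a given solution: if `R(x, h⁰(x)) = 0` and the Jacobian
determinant `det(∂Rᵢ/∂yⱼ)(x, h⁰(x))` is a nonzero formal power series, then there is a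
positive integer `k` such that any formal solution `h` of `R(x, h(x)) = 0` agreeing
with `h⁰` up to order `k` equals `h⁰`. -/
theorem finite_determination_of_formal_solutions {q r : ℕ}
    (R : Fin r → MvPowerSeries (Fin q ⊕ Fin r) ℂ)
    (h0 : Fin r → MvPowerSeries (Fin q) ℂ)
    (hh00 : ∀ i, MvPowerSeries.constantCoeff (h0 i) = 0)
    (hsol0 : ∀ i, fsubst (Sum.elim MvPowerSeries.X h0) (R i) = 0)
    (hjac : Matrix.det
      (fun i j => fsubst (Sum.elim MvPowerSeries.X h0) (pd (Sum.inr j) (R i))) ≠ 0) :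
    ∃ k : ℕ, 0 < k ∧ ∀ h : Fin r → MvPowerSeries (Fin q) ℂ,
      (∀ i, MvPowerSeries.constantCoeff (h i) = 0) →
      (∀ i, fsubst (Sum.elim MvPowerSeries.X h) (R i) = 0) →
      (∀ i (m : Fin q →₀ ℕ), (m.sum fun _ e => e) ≤ k →
        MvPowerSeries.coeff m (h i) = MvPowerSeries.coeff m (h0 i)) →
      h = h0 := by
  have ha0 := constantCoeff_sumElim_X hh00
  simp only [fsubst_eq_subst ha0, pd_eq_pderiv] at hsol0 hjac
  obtain ⟨d, hd⟩ : ∃ d : ℕ, (jacobianAlong R h0).det.order = d :=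
    ENat.ne_top_iff_exists.mp (order_eq_top_iff.not.mpr hjac) |>.imp fun _ => Eq.symm
  refine ⟨d + 1, d.succ_pos, fun h hh hsol hagree => ?_⟩
  simp only [fsubst_eq_subst (constantCoeff_sumElim_X hh)] at hsol
  refine eq_of_order_det_jacobianAlong_lt R hh hh00 hsol hsol0 fun j => ?_
  have hδ : ((d + 2 : ℕ) : ℕ∞) ≤ (h j - h0 j).order :=
    nat_le_order fun e he => by rw [map_sub, hagree j e (Nat.lt_succ_iff.mp he), sub_self]
  rw [hd]
  exact lt_of_lt_of_le (by norm_cast; omega) hδ
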